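/- arXiv:math-ph/0402026 — 7 statements merged into one kernel-verified Lean document; each statement's English description precedes it below -/
import Mathlib

section
/- The function Z(x) = log(eˣ + 1) satisfies (H D₀ Z)(x) = 0 pointwise, where D₀ = -d²/dx² and H = -d²/dx² + 1 + V with V(x) = -(3/2)/cosh(x/2)². -/
/-!
Z' is the logistic function and Z'' = eˣ/(eˣ + 1)² = 1/(4 cosh²(x/2)), so D₀ Z = -¼ sech²(x/2).
The profile g = sech²(a x) satisfies g'' = 4a² g - 6a² g², the Pöschl–Teller ground-state
equation; for a = ½ this reads -g'' + g - (3/2) sech²(x/2) g = 0, which is H g = 0.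
-/

open Real

lemma deriv_log_exp_add_one :
    deriv (fun x : ℝ => log (exp x + 1)) = fun x => exp x / (exp x + 1) := by
  funext x
  simpa using (((hasDerivAt_exp x).add_const 1).log (by positivity)).deriv

lemma exp_div_exp_add_one_sq (x : ℝ) :
    exp x / (exp x + 1) ^ 2 = 1 / (4 * cosh (x / 2) ^ 2) := by
  have hx : exp x = exp (x / 2) ^ 2 := by rw [← exp_nat_mul]; ring_nf
  have hpos : exp (x / 2) ≠ 0 := (exp_pos _).ne'
  rw [hx, cosh_eq, exp_neg]
  field_simp
  ring

lemma deriv_logistic :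
    deriv (fun x : ℝ => exp x / (exp x + 1)) = fun x => 1 / (4 * cosh (x / 2) ^ 2) := by
  funext x
  have h : HasDerivAt (fun x : ℝ => exp x / (exp x + 1)) _ x :=
    (hasDerivAt_exp x).div ((hasDerivAt_exp x).add_const 1) (by positivity)
  rw [h.deriv, ← exp_div_exp_add_one_sq]
  field_simp
  ring

section SechSq

variable (a : ℝ)

lemma hasDerivAt_one_div_cosh_sq (x : ℝ) :
    HasDerivAt (fun x : ℝ => 1 / cosh (a * x) ^ 2)
      (-2 * a * (sinh (a * x) / cosh (a * x) ^ 3)) x := by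
  have hax := (hasDerivAt_id x).const_mul a
  have h : HasDerivAt (fun x : ℝ => 1 / cosh (a * x) ^ 2) _ x :=
    (hasDerivAt_const x 1).div (hax.cosh.pow 2) (pow_pos (cosh_pos _) 2).ne'
  convert h using 1
  have := (cosh_pos (a * x)).ne'
  simp only [id, mul_one, Nat.cast_ofNat]
  field_simp
  ring

lemma hasDerivAt_sinh_div_cosh_cube (x : ℝ) :
    HasDerivAt (fun x : ℝ => sinh (a * x) / cosh (a * x) ^ 3)
      (a * (3 - 2 * cosh (a * x) ^ 2) / cosh (a * x) ^ 4) x := by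
  have hax := (hasDerivAt_id x).const_mul a
  have h : HasDerivAt (fun x : ℝ => sinh (a * x) / cosh (a * x) ^ 3) _ x :=
    hax.sinh.div (hax.cosh.pow 3) (pow_pos (cosh_pos _) 3).ne'
  convert h using 1
  have := (cosh_pos (a * x)).ne'
  simp only [id, mul_one, Nat.cast_ofNat]
  field_simp
  linear_combination (-3 * a * cosh (a * x) ^ 2) * cosh_sq (a * x)

lemma deriv_deriv_one_div_cosh_sq (x : ℝ) :
    deriv (deriv fun x : ℝ => 1 / cosh (a * x) ^ 2) x
      = 4 * a ^ 2 * (1 / cosh (a * x) ^ 2) - 6 * a ^ 2 * (1 / cosh (a * x) ^ 2) ^ 2 := by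
  rw [funext fun y => (hasDerivAt_one_div_cosh_sq a y).deriv,
    ((hasDerivAt_sinh_div_cosh_cube a x).const_mul (-2 * a)).deriv]
  have := (cosh_pos (a * x)).ne'
  field_simp
  ring

end SechSq

/-- Z(x) = log(eˣ + 1) satisfies (H D₀ Z)(x) = 0 where D₀f = -f'' and
    Hf = -f'' + f + Vf with V(x) = -(3/2)/cosh(x/2)². -/
theorem stmt_5 (x : ℝ) :
    -(deriv (deriv (fun y : ℝ =>
        -(deriv (deriv (fun z : ℝ => Real.log (Real.exp z + 1))) y))) x)
      + (-(deriv (deriv (fun z : ℝ => Real.log (Real.exp z + 1))) x))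
      + (-(3 / 2) / (Real.cosh (x / 2)) ^ 2)
        * (-(deriv (deriv (fun z : ℝ => Real.log (Real.exp z + 1))) x)) = 0 := by
  have hZ : deriv (deriv fun z : ℝ => log (exp z + 1))
      = fun y => 1 / 4 * (1 / cosh (1 / 2 * y) ^ 2) := by
    rw [deriv_log_exp_add_one, deriv_logistic]
    funext y
    rw [div_eq_inv_mul y, one_div 2]
    ring
  have hD₀Z : (fun y => -deriv (deriv fun z : ℝ => log (exp z + 1)) y)
      = fun y => -1 / 4 * (1 / cosh (1 / 2 * y) ^ 2) := by
    rw [hZ]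
    ring_nf
  rw [hD₀Z, hZ, deriv_const_mul_field', deriv_const_mul_field']
  beta_reduce
  rw [deriv_deriv_one_div_cosh_sq, div_eq_inv_mul x, one_div 2]
  have := (cosh_pos (2⁻¹ * x)).ne'
  field_simp
  ring
end

section
/- For every k > 0, the spectrum of the operator A_k = D_k^{1/2} H_k D_k^{1/2} on L²(ℝ) is contained in [k⁴, ∞), where D_k = -d²/dx² + k² and H_k = D_k + 1 + V with V(x) = -(3/2)/cosh(x/2)². Equivalently, for all u in the domain, ⟨u, H_k u⟩ ≥ k⁴ ⟨u, D_k^{-1} u⟩. -/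
open MeasureTheory


section AuxStmt6
open Real

lemma exp_abs_int (k : ℝ) (hk : 0 < k) : ∫ x : ℝ, Real.exp (-(k * |x|)) = 2 / k := by
  rw [integral_comp_abs (f := fun t => Real.exp (-(k * t)))]
  have h := integral_comp_mul_left_Ioi (fun x => Real.exp (-x)) 0 hk
  simp only [mul_zero, smul_eq_mul, integral_exp_neg_Ioi, neg_zero, Real.exp_zero, mul_one] at h
  rw [h]; field_simp

lemma exp_abs_integrable (k : ℝ) (hk : 0 < k) :
    Integrable (fun x : ℝ => Real.exp (-(k * |x|))) := by
  have h1 : IntegrableOn (fun x : ℝ => Real.exp (-(k * |x|))) (Set.Ioi 0) := by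
    refine (exp_neg_integrableOn_Ioi 0 hk).congr_fun (fun x hx => ?_) measurableSet_Ioi
    rw [abs_of_pos (by exact hx)]; simp only [neg_mul]
  have h2 : IntegrableOn (fun x : ℝ => Real.exp (-(k * |x|))) (Set.Iic 0) := by
    rw [← Measure.map_neg_eq_self (volume : Measure ℝ)]
    have m : MeasurableEmbedding fun x : ℝ => -x := (Homeomorph.neg ℝ).measurableEmbedding
    rw [m.integrableOn_map_iff]
    simp only [Function.comp_def, abs_neg, Set.neg_preimage, Set.neg_Iic, neg_zero]
    exact Iff.mpr integrableOn_Ici_iff_integrableOn_Ioi h1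
  have := h2.union h1
  rwa [Set.Iic_union_Ioi, integrableOn_univ] at this

lemma part2 (k : ℝ) (hk : 0 < k) (u : ℝ → ℝ) (hc : Continuous u)
    (hsupp : HasCompactSupport u) :
    k ^ 2 * ∫ x : ℝ, u x * ∫ y : ℝ, (Real.exp (-(k * |x - y|)) / (2 * k)) * u y
      ≤ ∫ x : ℝ, u x ^ 2 := by
  set G : ℝ → ℝ := fun t => Real.exp (-(k * |t|)) / (2 * k) with hG
  have hGcont : Continuous G := by
    fun_prop
  have hGnonneg : ∀ t, 0 ≤ G t := fun t => by positivity
  have hGint : Integrable G := (exp_abs_integrable k hk).div_const _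
  have hGI : ∫ t : ℝ, G t = 1 / k ^ 2 := by
    rw [hG]
    rw [integral_div, exp_abs_int k hk]
    field_simp
  -- F on the product space
  set F : ℝ × ℝ → ℝ := fun p => G (p.1 - p.2) * (u p.1 * u p.2) with hF
  have hFcont : Continuous F := by fun_prop
  have hFsupp : HasCompactSupport F := by
    apply HasCompactSupport.intro (hsupp.prod hsupp)
    intro p hp
    simp only [Set.mem_prod, not_and_or] at hp
    rcases hp with h | h
    · simp [hF, image_eq_zero_of_notMem_tsupport h]
    · simp [hF, image_eq_zero_of_notMem_tsupport h]
  have hFint : Integrable F := hFcont.integrable_of_hasCompactSupport hFsupp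
  -- rewrite LHS inner integral
  have hinner : ∀ x : ℝ, u x * ∫ y : ℝ, (Real.exp (-(k * |x - y|)) / (2 * k)) * u y
      = ∫ y : ℝ, F (x, y) := by
    intro x
    rw [← integral_const_mul]
    congr 1 with y
    simp only [hF, hG]; ring
  have hLHS : ∫ x : ℝ, u x * ∫ y : ℝ, (Real.exp (-(k * |x - y|)) / (2 * k)) * u y
      = ∫ p : ℝ × ℝ, F p ∂(volume.prod volume) := by
    simp_rw [hinner]
    exact integral_integral (f := fun x y => F (x, y)) hFint
  -- majorant H1
  -- majorant H1
  set H1 : ℝ × ℝ → ℝ := fun p => G (p.1 - p.2) * u p.1 ^ 2 with hH1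
  have hxint : ∀ x : ℝ, Integrable (fun y => H1 (x, y)) := fun x => by
    simpa only [hH1] using (hGint.comp_sub_left x).mul_const (u x ^ 2)
  have hxI : ∀ x : ℝ, ∫ y : ℝ, H1 (x, y) = u x ^ 2 * (1 / k ^ 2) := by
    intro x
    simp only [hH1]
    rw [integral_mul_const, integral_sub_left_eq_self G volume x, hGI]
    ring
  have hH1int : Integrable H1 (volume.prod volume) := by
    rw [integrable_prod_iff (by fun_prop : Continuous H1).aestronglyMeasurable]
    refine ⟨Filter.Eventually.of_forall hxint, ?_⟩
    have : (fun x => ∫ y : ℝ, ‖H1 (x, y)‖) = fun x => u x ^ 2 * (1 / k ^ 2) := by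
      funext x
      rw [← hxI x]
      refine integral_congr_ae (Filter.Eventually.of_forall fun y => ?_)
      simp only [hH1, Real.norm_eq_abs, abs_mul]
      rw [abs_of_nonneg (hGnonneg _), abs_of_nonneg (by positivity)]
    rw [this]
    have hcs2 : HasCompactSupport (fun x : ℝ => u x ^ 2) := by
      have h : HasCompactSupport (u * u) := hsupp.mul_right
      simpa [pow_two] using (show HasCompactSupport (fun x => u x * u x) from h)
    exact ((hc.pow 2).integrable_of_hasCompactSupport hcs2).mul_const _
  have hH1I : ∫ p : ℝ × ℝ, H1 p ∂(volume.prod volume) = (∫ x : ℝ, u x ^ 2) * (1 / k ^ 2) := by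
    rw [← integral_integral (f := fun x y => H1 (x, y)) hH1int]
    simp_rw [hxI]
    rw [integral_mul_const]
  -- H2 = H1 ∘ swap
  have hH2int : Integrable (fun p : ℝ × ℝ => H1 p.swap) (volume.prod volume) := hH1int.swap
  have hH2I : ∫ p : ℝ × ℝ, H1 p.swap ∂(volume.prod volume)
      = (∫ x : ℝ, u x ^ 2) * (1 / k ^ 2) := by
    rw [integral_prod_swap, hH1I]
  -- pointwise bound
  have hbound : ∀ p : ℝ × ℝ, F p ≤ (H1 p + H1 p.swap) / 2 := by
    intro p
    simp only [hF, hH1, Prod.fst_swap, Prod.snd_swap, Prod.swap]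
    have h1 : u p.1 * u p.2 ≤ (u p.1 ^ 2 + u p.2 ^ 2) / 2 := by nlinarith [sq_nonneg (u p.1 - u p.2)]
    have h2 := hGnonneg (p.1 - p.2)
    have h3 : G (p.2 - p.1) = G (p.1 - p.2) := by simp [hG, abs_sub_comm]
    rw [h3]
    nlinarith [mul_le_mul_of_nonneg_left h1 h2]
  have hFle : ∫ p : ℝ × ℝ, F p ∂(volume.prod volume) ≤ (∫ x : ℝ, u x ^ 2) * (1 / k ^ 2) := by
    calc ∫ p : ℝ × ℝ, F p ∂(volume.prod volume)
        ≤ ∫ p : ℝ × ℝ, (H1 p + H1 p.swap) / 2 ∂(volume.prod volume) :=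
          integral_mono hFint ((hH1int.add hH2int).div_const 2) hbound
      _ = ((∫ x : ℝ, u x ^ 2) * (1 / k ^ 2) + (∫ x : ℝ, u x ^ 2) * (1 / k ^ 2)) / 2 := by
          rw [integral_div, integral_add hH1int hH2int, hH1I, hH2I]
      _ = (∫ x : ℝ, u x ^ 2) * (1 / k ^ 2) := by ring
  rw [hLHS]
  calc k ^ 2 * ∫ p : ℝ × ℝ, F p ∂(volume.prod volume)
      ≤ k ^ 2 * ((∫ x : ℝ, u x ^ 2) * (1 / k ^ 2)) := by
        exact mul_le_mul_of_nonneg_left hFle (by positivity)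
    _ = ∫ x : ℝ, u x ^ 2 := by field_simp

lemma part1 (k : ℝ) (u : ℝ → ℝ) (hu : ContDiff ℝ (⊤ : ℕ∞) u) (hsupp : HasCompactSupport u) :
    k ^ 2 * ∫ x : ℝ, u x ^ 2
      ≤ ∫ x : ℝ, ((deriv u x) ^ 2
        + (k ^ 2 + 1 + (-(3 / 2) / (Real.cosh (x / 2)) ^ 2)) * (u x) ^ 2) := by
  have hcne : ∀ x : ℝ, Real.cosh (x / 2) ≠ 0 := fun x => (Real.cosh_pos _).ne'
  set t : ℝ → ℝ := fun x => Real.sinh (x / 2) / Real.cosh (x / 2) with hT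
  have hu' : ∀ x, HasDerivAt u (deriv u x) x := fun x =>
    ((hu.differentiable (by simp)) x).hasDerivAt
  have hudc : Continuous (deriv u) := (hu.continuous_deriv (by simp))
  have huc : Continuous u := hu.continuous
  have hhalf : ∀ x : ℝ, HasDerivAt (fun y : ℝ => y / 2) (1 / 2) x := fun x => by
    simpa using (hasDerivAt_id x).div_const 2
  have hs : ∀ x, HasDerivAt (fun x : ℝ => Real.sinh (x / 2))
      (Real.cosh (x / 2) * (1 / 2)) x := fun x =>
    (Real.hasDerivAt_sinh _).comp x (hhalf x)
  have hcosh : ∀ x, HasDerivAt (fun x : ℝ => Real.cosh (x / 2))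
      (Real.sinh (x / 2) * (1 / 2)) x := fun x =>
    (Real.hasDerivAt_cosh _).comp x (hhalf x)
  have ht : ∀ x, HasDerivAt t (1 / (2 * Real.cosh (x / 2) ^ 2)) x := by
    intro x
    have h := (hs x).div (hcosh x) (hcne x)
    have heq : (Real.cosh (x / 2) * (1 / 2) * Real.cosh (x / 2)
        - Real.sinh (x / 2) * (Real.sinh (x / 2) * (1 / 2))) / Real.cosh (x / 2) ^ 2
        = 1 / (2 * Real.cosh (x / 2) ^ 2) := by
      have h1 := Real.cosh_sq_sub_sinh_sq (x / 2)
      field_simp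
      nlinarith [h1]
    rwa [heq] at h
  set g : ℝ → ℝ := fun x => -(t x * u x ^ 2) with hg
  have hu2 : ∀ x, HasDerivAt (fun x => u x ^ 2) (2 * u x * deriv u x) x := fun x => by
    have h := (hu' x).pow 2
    simp at h
    exact h
  have hgd : ∀ x, HasDerivAt g
      (-(1 / (2 * Real.cosh (x / 2) ^ 2) * u x ^ 2 + t x * (2 * u x * deriv u x))) x :=
    fun x => ((ht x).mul (hu2 x)).neg
  have hgderiv : ∀ x, deriv g x
      = -(1 / (2 * Real.cosh (x / 2) ^ 2) * u x ^ 2 + t x * (2 * u x * deriv u x)) :=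
    fun x => (hgd x).deriv
  have hgC1 : ContDiff ℝ 1 g := by
    have htc : ContDiff ℝ 1 t := by
      have h2 : ContDiff ℝ 1 (fun x : ℝ => x / 2) := (contDiff_id.div_const 2)
      exact (Real.contDiff_sinh.of_le le_top |>.comp h2).div
        (Real.contDiff_cosh.of_le le_top |>.comp h2) hcne
    exact (htc.mul ((hu.of_le (by simp)).pow 2)).neg
  have hgsupp : HasCompactSupport g := by
    apply HasCompactSupport.intro hsupp
    intro x hx
    simp [hg, image_eq_zero_of_notMem_tsupport hx]
  have hgdint : Integrable (deriv g) := by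
    have hcont : Continuous (deriv g) := by
      rw [funext hgderiv]
      have h1 : Continuous fun x : ℝ => 1 / (2 * Real.cosh (x / 2) ^ 2) :=
        continuous_const.div (by fun_prop) (fun x => by positivity)
      have h2 : Continuous t := Continuous.div (by fun_prop) (by fun_prop) hcne
      exact ((h1.mul (huc.pow 2)).add (h2.mul ((continuous_const.mul huc).mul hudc))).neg
    exact hcont.integrable_of_hasCompactSupport hgsupp.deriv
  have h0 : ∫ x : ℝ, deriv g x = 0 := by
    rw [← intervalIntegral.integral_Iic_add_Ioi (b := 0) hgdint.integrableOn hgdint.integrableOn,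
      HasCompactSupport.integral_Iic_deriv_eq hgC1 hgsupp 0,
      HasCompactSupport.integral_Ioi_deriv_eq hgC1 hgsupp 0]
    ring
  -- pointwise identity
  have hpoint : ∀ x : ℝ, (deriv u x) ^ 2
      + (k ^ 2 + 1 + (-(3 / 2) / (Real.cosh (x / 2)) ^ 2)) * (u x) ^ 2
      = ((deriv u x + t x * u x) ^ 2 + k ^ 2 * u x ^ 2) + deriv g x := by
    intro x
    rw [hgderiv x]
    have h1 := Real.cosh_sq_sub_sinh_sq (x / 2)
    have h2 := hcne x
    simp only [hT]
    field_simp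
    linear_combination (2 * u x ^ 2) * h1
  -- integrabilities
  have hu2int : Integrable (fun x => u x ^ 2) := by
    have h : HasCompactSupport (u * u) := hsupp.mul_right
    have hcs2 : HasCompactSupport (fun x : ℝ => u x ^ 2) := by
      simpa [pow_two] using (show HasCompactSupport (fun x => u x * u x) from h)
    exact (huc.pow 2).integrable_of_hasCompactSupport hcs2
  have hsqint : Integrable (fun x => (deriv u x + t x * u x) ^ 2) := by
    have hcont : Continuous fun x => (deriv u x + t x * u x) ^ 2 := by
      have h2 : Continuous t := Continuous.div (by fun_prop) (by fun_prop) hcne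
      exact (hudc.add (h2.mul huc)).pow 2
    refine hcont.integrable_of_hasCompactSupport (HasCompactSupport.intro hsupp fun x hx => ?_)
    have h1 : u x = 0 := image_eq_zero_of_notMem_tsupport hx
    have h2 : deriv u x = 0 := by
      by_contra h
      exact hx (support_deriv_subset (by simpa [Function.mem_support] using h))
    simp [h1, h2]
  have hAint : Integrable (fun x => (deriv u x + t x * u x) ^ 2 + k ^ 2 * u x ^ 2) :=
    hsqint.add (hu2int.const_mul _)
  calc k ^ 2 * ∫ x : ℝ, u x ^ 2
      ≤ (∫ x : ℝ, (deriv u x + t x * u x) ^ 2) + k ^ 2 * ∫ x : ℝ, u x ^ 2 := by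
        nlinarith [integral_nonneg (μ := volume) (f := fun x => (deriv u x + t x * u x) ^ 2) (fun x => sq_nonneg (deriv u x + t x * u x))]
    _ = ∫ x : ℝ, ((deriv u x + t x * u x) ^ 2 + k ^ 2 * u x ^ 2) := by
        rw [integral_add hsqint (hu2int.const_mul _), integral_const_mul]
    _ = ∫ x : ℝ, (((deriv u x + t x * u x) ^ 2 + k ^ 2 * u x ^ 2) + deriv g x) := by
        rw [integral_add hAint hgdint, h0, add_zero]
    _ = ∫ x : ℝ, ((deriv u x) ^ 2
        + (k ^ 2 + 1 + (-(3 / 2) / (Real.cosh (x / 2)) ^ 2)) * (u x) ^ 2) := by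
        refine integral_congr_ae (Filter.Eventually.of_forall fun x => ?_)
        exact (hpoint x).symm

end AuxStmt6

/-- Quadratic form version of σ(A_k) ⊆ [k⁴, ∞):
    ⟨u, H_k u⟩ ≥ k⁴ ⟨u, D_k⁻¹ u⟩ where D_k⁻¹ is convolution with G_k(x) = e^{-k|x|}/(2k),
    and ⟨u, H_k u⟩ = ∫ (u'² + (k² + 1 + V) u²) with V(x) = -(3/2)/cosh(x/2)². -/
theorem stmt_6 (k : ℝ) (hk : 0 < k) (u : ℝ → ℝ)
    (hu : ContDiff ℝ (⊤ : ℕ∞) u) (hsupp : HasCompactSupport u) :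
    (∫ x : ℝ, ((deriv u x) ^ 2
        + (k ^ 2 + 1 + (-(3 / 2) / (Real.cosh (x / 2)) ^ 2)) * (u x) ^ 2))
      ≥ k ^ 4 * ∫ x : ℝ, u x * ∫ y : ℝ, (Real.exp (-(k * |x - y|)) / (2 * k)) * u y := by
  rw [ge_iff_le]
  calc k ^ 4 * ∫ x : ℝ, u x * ∫ y : ℝ, (Real.exp (-(k * |x - y|)) / (2 * k)) * u y
      = k ^ 2 * (k ^ 2 * ∫ x : ℝ, u x * ∫ y : ℝ, (Real.exp (-(k * |x - y|)) / (2 * k)) * u y) := by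
        ring
    _ ≤ k ^ 2 * ∫ x : ℝ, u x ^ 2 :=
        mul_le_mul_of_nonneg_left (part2 k hk u hu.continuous hsupp) (by positivity)
    _ ≤ _ := part1 k u hu hsupp
end

section
/- Let V(x) = -(3/2)/cosh(x/2)² and k > 0. Testing with the zero mode: ⟨φ₁, H_k φ₁⟩ = k² ‖φ₁‖², where φ₁(x) = (1/4) sech(x/2)², H_k = -∂ₓ² + k² + 1 + V. Consequently the minimax value inf_u ⟨u, H_k u⟩/⟨u, G_k u⟩ is at most k²‖φ₁‖²/⟨φ₁, G_k φ₁⟩, which is bounded by C k³ for small k and some constant C. -/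
/-!
The zero mode `φ₁ x = 1 / (4 cosh² (x / 2))` solves `φ₁'' = (1 + V) φ₁`, so
`(φ₁ φ₁')' = φ₁'² + (1 + V) φ₁²`; integrating over `ℝ`, the `H₀`-energy of `φ₁` vanishes and its
`H_k`-energy is `k² ‖φ₁‖²`. For the denominator, `e^{-k|x-y|} ≥ e^{-|x-y|}` when `k ≤ 1`, so
`⟨φ₁, G_k φ₁⟩ ≥ B / (2k)` with `B = ∫∫ φ₁(x) e^{-|x-y|} φ₁(y) > 0`, and the quotient is at most
`(2 ‖φ₁‖² / B) k³`.
-/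

open MeasureTheory Real

theorem Real.one_add_sq_le_cosh_sq (y : ℝ) : 1 + y ^ 2 ≤ cosh y ^ 2 := by
  have h : |y| ≤ |sinh y| := abs_sinh y ▸ self_le_sinh_iff.2 (abs_nonneg y)
  linarith [cosh_sq' y, sq_le_sq.2 h]

theorem Real.abs_sinh_le_cosh (x : ℝ) : |sinh x| ≤ cosh x :=
  abs_le.2 ⟨by linarith [sinh_lt_cosh (-x), sinh_neg x, cosh_neg x], (sinh_lt_cosh x).le⟩

theorem MeasureTheory.integral_pos_of_forall_pos {α : Type*} [MeasurableSpace α] {μ : Measure α}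
    [NeZero μ] {f : α → ℝ} (hf : Integrable f μ) (hpos : ∀ x, 0 < f x) : 0 < ∫ x, f x ∂μ := by
  rw [integral_pos_iff_support_of_nonneg (fun x => (hpos x).le) hf,
    Function.support_eq_univ fun x => (hpos x).ne']
  exact Measure.measure_univ_pos.2 (NeZero.ne μ)

theorem integral_deriv_sq_add_mul_sq_of_zero_mode {u u' V : ℝ → ℝ} {m : ℝ} (k : ℝ)
    (hu : ∀ x, HasDerivAt u (u' x) x) (hu' : ∀ x, HasDerivAt u' ((m + V x) * u x) x)
    (h_uu' : Integrable fun x => u x * u' x) (h_u2 : Integrable fun x => u x ^ 2)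
    (h_form : Integrable fun x => u' x ^ 2 + (m + V x) * u x ^ 2) :
    ∫ x, (deriv u x ^ 2 + (k ^ 2 + m + V x) * u x ^ 2) = k ^ 2 * ∫ x, u x ^ 2 := by
  have h_zero : ∫ x, (u' x ^ 2 + (m + V x) * u x ^ 2) = 0 :=
    integral_eq_zero_of_hasDerivAt_of_integrable
      (fun x => ((hu x).mul (hu' x)).congr_deriv (by ring)) h_form h_uu'
  calc ∫ x, (deriv u x ^ 2 + (k ^ 2 + m + V x) * u x ^ 2)
      = ∫ x, ((u' x ^ 2 + (m + V x) * u x ^ 2) + k ^ 2 * u x ^ 2) := by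
        congr 1 with x
        rw [(hu x).deriv]
        ring
    _ = k ^ 2 * ∫ x, u x ^ 2 := by
        rw [integral_add h_form (h_u2.const_mul _), h_zero, integral_const_mul, zero_add]

section ExpKernel

variable {f : ℝ → ℝ} {k : ℝ}

/-- `2k ⟨f, G_k f⟩`, where `G_k` is convolution with `e^{-k|x|} / (2k)`. -/
noncomputable def expKernelForm (k : ℝ) (f : ℝ → ℝ) : ℝ :=
  ∫ x, f x * ∫ y, exp (-(k * |x - y|)) * f y

theorem exp_neg_mul_abs_le_one (hk : 0 ≤ k) (z : ℝ) : exp (-(k * |z|)) ≤ 1 :=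
  exp_le_one_iff.2 (neg_nonpos.2 (by positivity))

theorem integrable_exp_neg_mul_abs_sub_mul (hk : 0 ≤ k) (hf : Integrable f) (x : ℝ) :
    Integrable fun y => exp (-(k * |x - y|)) * f y :=
  hf.bdd_mul (c := 1) (by fun_prop)
    (ae_of_all _ fun y => by
      rw [norm_of_nonneg (exp_pos _).le]; exact exp_neg_mul_abs_le_one hk _)

theorem integrable_mul_integral_exp_neg_mul_abs_sub_mul (hk : 0 ≤ k) (hf : Integrable f) :
    Integrable fun x => f x * ∫ y, exp (-(k * |x - y|)) * f y := by
  have h_meas : AEStronglyMeasurable (fun p : ℝ × ℝ => exp (-(k * |p.1 - p.2|)) * f p.2)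
      (volume.prod volume) :=
    (Continuous.aestronglyMeasurable (by fun_prop)).mul hf.aestronglyMeasurable.comp_snd
  refine hf.mul_bdd (c := ∫ y, ‖f y‖) h_meas.integral_prod_right' (ae_of_all _ fun x => ?_)
  refine norm_integral_le_of_norm_le hf.norm (ae_of_all _ fun y => ?_)
  rw [norm_mul, norm_of_nonneg (exp_pos _).le]
  exact mul_le_of_le_one_left (norm_nonneg _) (exp_neg_mul_abs_le_one hk _)

theorem expKernelForm_antitoneOn (hf : Integrable f) (hf0 : 0 ≤ f) :
    AntitoneOn (fun k => expKernelForm k f) (Set.Ici 0) := by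
  intro k hk k' hk' hkk'
  refine integral_mono (integrable_mul_integral_exp_neg_mul_abs_sub_mul hk' hf)
    (integrable_mul_integral_exp_neg_mul_abs_sub_mul hk hf) fun x => ?_
  refine mul_le_mul_of_nonneg_left (integral_mono (integrable_exp_neg_mul_abs_sub_mul hk' hf x)
    (integrable_exp_neg_mul_abs_sub_mul hk hf x) fun y => ?_) (hf0 x)
  have : k * |x - y| ≤ k' * |x - y| := mul_le_mul_of_nonneg_right hkk' (abs_nonneg _)
  exact mul_le_mul_of_nonneg_right (exp_le_exp.2 (neg_le_neg this)) (hf0 y)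

theorem expKernelForm_pos (hf : Integrable f) (hpos : ∀ x, 0 < f x) (hk : 0 ≤ k) :
    0 < expKernelForm k f :=
  integral_pos_of_forall_pos (integrable_mul_integral_exp_neg_mul_abs_sub_mul hk hf) fun x =>
    mul_pos (hpos x) (integral_pos_of_forall_pos (integrable_exp_neg_mul_abs_sub_mul hk hf x)
      fun y => mul_pos (exp_pos _) (hpos y))

theorem integral_mul_integral_exp_div_eq_expKernelForm :
    ∫ x, f x * ∫ y, exp (-(k * |x - y|)) / (2 * k) * f y = expKernelForm k f / (2 * k) := by
  simp_rw [div_mul_eq_mul_div, integral_div, mul_div_assoc', integral_div]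
  rfl

theorem sq_mul_div_integral_mul_integral_exp_div_le (hf : Integrable f) (hpos : ∀ x, 0 < f x)
    {a : ℝ} (ha : 0 ≤ a) (hk : 0 < k) (hk1 : k ≤ 1) :
    k ^ 2 * a / (∫ x, f x * ∫ y, exp (-(k * |x - y|)) / (2 * k) * f y)
      ≤ 2 * a / expKernelForm 1 f * k ^ 3 := by
  rw [integral_mul_integral_exp_div_eq_expKernelForm]
  have h_one : 0 < expKernelForm 1 f := expKernelForm_pos hf hpos zero_le_one
  have h_le : expKernelForm 1 f ≤ expKernelForm k f :=
    expKernelForm_antitoneOn hf (fun x => (hpos x).le) hk.le (Set.mem_Ici.2 zero_le_one) hk1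
  have h_k : 0 < expKernelForm k f := h_one.trans_le h_le
  calc k ^ 2 * a / (expKernelForm k f / (2 * k)) = 2 * a * k ^ 3 / expKernelForm k f := by
        field_simp
    _ ≤ 2 * a * k ^ 3 / expKernelForm 1 f := by gcongr
    _ = 2 * a / expKernelForm 1 f * k ^ 3 := by ring

end ExpKernel

namespace PoschlTeller

noncomputable def zeroMode (x : ℝ) : ℝ := 1 / (4 * cosh (x / 2) ^ 2)

noncomputable def zeroModeDeriv (x : ℝ) : ℝ := -sinh (x / 2) / (4 * cosh (x / 2) ^ 3)

noncomputable def potential (x : ℝ) : ℝ := -(3 / 2) / cosh (x / 2) ^ 2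

theorem hasDerivAt_zeroMode (x : ℝ) : HasDerivAt zeroMode (zeroModeDeriv x) x := by
  have hc : HasDerivAt (fun y => cosh (y / 2)) (sinh (x / 2) * (1 / 2)) x :=
    ((hasDerivAt_id x).div_const 2).cosh
  have hc0 := cosh_pos (x / 2)
  refine ((hasDerivAt_const x (1 : ℝ)).div ((hc.fun_pow 2).const_mul 4)
    (by positivity : 4 * cosh (x / 2) ^ 2 ≠ 0)).congr_deriv ?_
  rw [zeroModeDeriv]
  field_simp
  ring

theorem hasDerivAt_zeroModeDeriv (x : ℝ) :
    HasDerivAt zeroModeDeriv ((1 + potential x) * zeroMode x) x := by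
  have hc : HasDerivAt (fun y => cosh (y / 2)) (sinh (x / 2) * (1 / 2)) x :=
    ((hasDerivAt_id x).div_const 2).cosh
  have hs : HasDerivAt (fun y => sinh (y / 2)) (cosh (x / 2) * (1 / 2)) x :=
    ((hasDerivAt_id x).div_const 2).sinh
  have hc0 := cosh_pos (x / 2)
  refine (hs.fun_neg.div ((hc.fun_pow 3).const_mul 4)
    (by positivity : 4 * cosh (x / 2) ^ 3 ≠ 0)).congr_deriv ?_
  rw [potential, zeroMode]
  field_simp
  linear_combination (-3 * cosh (x / 2) ^ 2) * cosh_sq_sub_sinh_sq (x / 2)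

theorem zeroMode_pos (x : ℝ) : 0 < zeroMode x := by
  have := cosh_pos (x / 2)
  unfold zeroMode
  positivity

theorem zeroMode_le_inv_one_add_sq (x : ℝ) : zeroMode x ≤ (1 + x ^ 2)⁻¹ := by
  rw [zeroMode, one_div]
  refine inv_anti₀ (by positivity) ?_
  linarith [one_add_sq_le_cosh_sq (x / 2), sq_nonneg x]

theorem zeroMode_le_quarter (x : ℝ) : zeroMode x ≤ 1 / 4 := by
  rw [zeroMode]
  gcongr
  nlinarith [one_le_cosh (x / 2)]

theorem abs_zeroModeDeriv_le (x : ℝ) : |zeroModeDeriv x| ≤ zeroMode x := by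
  have hc := cosh_pos (x / 2)
  rw [zeroModeDeriv, zeroMode, abs_div, abs_neg,
    abs_of_pos (by positivity : 0 < 4 * cosh (x / 2) ^ 3),
    div_le_div_iff₀ (by positivity) (by positivity)]
  nlinarith [abs_sinh_le_cosh (x / 2)]

theorem abs_one_add_potential_le (x : ℝ) : |1 + potential x| ≤ 1 := by
  have hc : 1 ≤ cosh (x / 2) ^ 2 := one_le_pow₀ (one_le_cosh _)
  have h : 3 / 2 / cosh (x / 2) ^ 2 ≤ 3 / 2 := div_le_self (by norm_num) hc
  have h0 : 0 ≤ 3 / 2 / cosh (x / 2) ^ 2 := by positivity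
  rw [potential, neg_div, abs_le]
  constructor <;> linarith

@[fun_prop]
theorem continuous_zeroMode : Continuous zeroMode :=
  continuous_iff_continuousAt.2 fun x => (hasDerivAt_zeroMode x).continuousAt

@[fun_prop]
theorem continuous_zeroModeDeriv : Continuous zeroModeDeriv :=
  continuous_iff_continuousAt.2 fun x => (hasDerivAt_zeroModeDeriv x).continuousAt

@[fun_prop]
theorem continuous_potential : Continuous potential :=
  continuous_const.div (by fun_prop) fun x => (pow_pos (cosh_pos _) 2).ne'

theorem integrable_zeroMode : Integrable zeroMode :=
  integrable_inv_one_add_sq.mono' continuous_zeroMode.aestronglyMeasurable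
    (ae_of_all _ fun x => (abs_of_pos (zeroMode_pos x)).trans_le (zeroMode_le_inv_one_add_sq x))

theorem integrable_zeroMode_sq : Integrable fun x => zeroMode x ^ 2 := by
  simp_rw [sq]
  exact integrable_zeroMode.mul_bdd continuous_zeroMode.aestronglyMeasurable
    (ae_of_all _ fun x => (abs_of_pos (zeroMode_pos x)).trans_le (zeroMode_le_quarter x))

theorem integrable_of_abs_le_mul_zeroMode_sq {g : ℝ → ℝ} (hg : Continuous g) (C : ℝ)
    (h : ∀ x, |g x| ≤ C * zeroMode x ^ 2) : Integrable g :=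
  (integrable_zeroMode_sq.const_mul C).mono' hg.aestronglyMeasurable (ae_of_all _ h)

theorem integral_deriv_zeroMode_sq_add (k : ℝ) :
    ∫ x, (deriv zeroMode x ^ 2 + (k ^ 2 + 1 + potential x) * zeroMode x ^ 2)
      = k ^ 2 * ∫ x, zeroMode x ^ 2 := by
  refine integral_deriv_sq_add_mul_sq_of_zero_mode k hasDerivAt_zeroMode hasDerivAt_zeroModeDeriv
    (integrable_of_abs_le_mul_zeroMode_sq (by fun_prop) 1 fun x => ?_) integrable_zeroMode_sq
    (integrable_of_abs_le_mul_zeroMode_sq (by fun_prop) 2 fun x => ?_)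
  · rw [abs_mul, abs_of_pos (zeroMode_pos x), one_mul, sq]
    exact mul_le_mul_of_nonneg_left (abs_zeroModeDeriv_le x) (zeroMode_pos x).le
  · have h_deriv := pow_le_pow_left₀ (abs_nonneg _) (abs_zeroModeDeriv_le x) 2
    have h_pot := mul_le_mul_of_nonneg_right (abs_one_add_potential_le x) (sq_nonneg (zeroMode x))
    refine (abs_add_le _ _).trans ?_
    rw [abs_mul, abs_pow, abs_pow, abs_of_pos (zeroMode_pos x)]
    linarith

end PoschlTeller

open PoschlTeller in
/-- Testing with the zero mode φ₁(x) = (1/4) sech(x/2)²: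
    ⟨φ₁, H_k φ₁⟩ = k² ‖φ₁‖², and the quotient k²‖φ₁‖²/⟨φ₁, G_k φ₁⟩ is ≤ C k³
    for small k. -/
theorem stmt_8 :
    (∀ k : ℝ, 0 < k →
      (∫ x : ℝ, ((deriv (fun y : ℝ => 1 / (4 * (Real.cosh (y / 2)) ^ 2)) x) ^ 2
          + (k ^ 2 + 1 + (-(3 / 2) / (Real.cosh (x / 2)) ^ 2))
            * (1 / (4 * (Real.cosh (x / 2)) ^ 2)) ^ 2))
        = k ^ 2 * ∫ x : ℝ, (1 / (4 * (Real.cosh (x / 2)) ^ 2)) ^ 2) ∧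
    (∃ C : ℝ, 0 < C ∧ ∀ k : ℝ, 0 < k → k ≤ 1 →
      (k ^ 2 * ∫ x : ℝ, (1 / (4 * (Real.cosh (x / 2)) ^ 2)) ^ 2)
        / (∫ x : ℝ, (1 / (4 * (Real.cosh (x / 2)) ^ 2))
            * ∫ y : ℝ, (Real.exp (-(k * |x - y|)) / (2 * k))
                * (1 / (4 * (Real.cosh (y / 2)) ^ 2)))
        ≤ C * k ^ 3) := by
  have hA : 0 < ∫ x, zeroMode x ^ 2 :=
    integral_pos_of_forall_pos integrable_zeroMode_sq fun x => pow_pos (zeroMode_pos x) 2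
  have hB : 0 < expKernelForm 1 zeroMode :=
    expKernelForm_pos integrable_zeroMode zeroMode_pos zero_le_one
  exact ⟨fun k _ => integral_deriv_zeroMode_sq_add k,
    2 * (∫ x, zeroMode x ^ 2) / expKernelForm 1 zeroMode, by positivity,
    fun k hk hk1 => sq_mul_div_integral_mul_integral_exp_div_le integrable_zeroMode zeroMode_pos
      hA.le hk hk1⟩
end

section
/- (Convolution with a decaying weight.) Let ω(x) = (1+|x|)^{-m} with m > 1 and let k, p > 0. If k > p then ∫_ℝ e^{-k|x-y|} ω(p y) dy ≤ C k^{-1} ω(p x), and if k ≤ p then ∫_ℝ e^{-k|x-y|} ω(p y) dy ≤ C (p^{-1} ω(k x) + k^{-1} ω(p x)), where C depends only on m. -/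
open MeasureTheory

/-- Polynomial decay beats exponential: `exp (-(c*t)) ≤ A * (1+t)^(-m)`. -/
lemma stmt9_exp_bound (m c : ℝ) (hm : 0 < m) (hc : 0 < c) :
    ∃ A : ℝ, 0 < A ∧ ∀ t : ℝ, 0 ≤ t → Real.exp (-(c * t)) ≤ A * (1 + t) ^ (-m) := by
  set n := ⌈m⌉₊ with hn
  have hnm : m ≤ (n : ℝ) := Nat.le_ceil m
  have hn1 : 1 ≤ n := Nat.one_le_ceil_iff.mpr hm
  have hn0 : (0:ℝ) < n := by exact_mod_cast hn1
  set B := max 1 ((n : ℝ) / c) with hB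
  have hB1 : (1:ℝ) ≤ B := le_max_left _ _
  have hBc : (n : ℝ) ≤ B * c := (div_le_iff₀ hc).mp (le_max_right _ _)
  refine ⟨B ^ n, by positivity, fun t ht => ?_⟩
  have h1t : (0:ℝ) < 1 + t := by linarith
  have key : (1 + t) ^ m ≤ B ^ n * Real.exp (c * t) := by
    calc (1 + t) ^ m ≤ (1 + t) ^ (n : ℝ) :=
          Real.rpow_le_rpow_of_exponent_le (by linarith) hnm
      _ = (1 + t) ^ n := Real.rpow_natCast _ n
      _ ≤ (B * (1 + c * t / n)) ^ n := by
          apply pow_le_pow_left₀ h1t.le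
          have h1 : 1 ≤ B := hB1
          have h2 : t ≤ B * (c * t / n) := by
            rw [mul_div_assoc']
            rw [le_div_iff₀ hn0]
            nlinarith
          nlinarith
      _ = B ^ n * (1 + c * t / n) ^ n := mul_pow _ _ _
      _ ≤ B ^ n * Real.exp (c * t / n) ^ n := by
          have hs : (0:ℝ) ≤ 1 + c * t / n := by positivity
          have h0 := Real.add_one_le_exp (c * t / n)
          have h' : (1 + c * t / n) ^ n ≤ Real.exp (c * t / n) ^ n :=
            pow_le_pow_left₀ hs (by linarith) n
          exact mul_le_mul_of_nonneg_left h' (by positivity)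
      _ = B ^ n * Real.exp (c * t) := by
          rw [← Real.exp_nat_mul]
          congr 1
          field_simp
  calc Real.exp (-(c * t))
      = (1 + t) ^ m * (1 + t) ^ (-m) * Real.exp (-(c * t)) := by
        rw [← Real.rpow_add h1t]
        simp
    _ ≤ (B ^ n * Real.exp (c * t)) * (1 + t) ^ (-m) * Real.exp (-(c * t)) := by
        have hw : (0:ℝ) ≤ (1 + t) ^ (-m) := by positivity
        exact mul_le_mul_of_nonneg_right
          (mul_le_mul_of_nonneg_right key hw) (Real.exp_pos _).le
    _ = B ^ n * (1 + t) ^ (-m) * (Real.exp (c * t) * Real.exp (-(c * t))) := by ring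
    _ = B ^ n * (1 + t) ^ (-m) := by
        rw [← Real.exp_add, add_neg_cancel, Real.exp_zero, mul_one]

/-- Convolution with a decaying weight ω(x) = (1+|x|)^{-m}, m > 1. -/
theorem stmt_9 (m : ℝ) (hm : 1 < m) :
    ∃ C : ℝ, 0 < C ∧ ∀ k p x : ℝ, 0 < k → 0 < p →
      (p < k →
        (∫ y : ℝ, Real.exp (-(k * |x - y|)) * (1 + |p * y|) ^ (-m))
          ≤ C * k⁻¹ * (1 + |p * x|) ^ (-m)) ∧
      (k ≤ p →
        (∫ y : ℝ, Real.exp (-(k * |x - y|)) * (1 + |p * y|) ^ (-m))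
          ≤ C * (p⁻¹ * (1 + |k * x|) ^ (-m) + k⁻¹ * (1 + |p * x|) ^ (-m))) := by
  have hm0 : (0:ℝ) < m := by linarith
  obtain ⟨D, hD0, hD⟩ := stmt9_exp_bound m (1/2) hm0 (by norm_num)
  obtain ⟨D', hD'0, hD'⟩ := stmt9_exp_bound m (1/4) hm0 (by norm_num)
  have ωnn : ∀ u : ℝ, (0:ℝ) ≤ (1 + |u|) ^ (-m) := by
    intro u; positivity
  have ωint : Integrable (fun u : ℝ => (1 + |u|) ^ (-m)) := by
    have h := integrable_one_add_norm (E := ℝ) (μ := volume) (r := m)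
      (by simpa using hm)
    simpa [Real.norm_eq_abs] using h
  have expbd : ∀ t : ℝ, Real.exp (-|t|) ≤ D * (1 + |t|) ^ (-m) := by
    intro t
    calc Real.exp (-|t|) ≤ Real.exp (-(1/2 * |t|)) := by
          apply Real.exp_le_exp.mpr
          have := abs_nonneg t
          linarith
      _ ≤ D * (1 + |t|) ^ (-m) := hD |t| (abs_nonneg t)
  have expInt : Integrable (fun t : ℝ => Real.exp (-|t|)) := by
    refine (ωint.const_mul D).mono' ?_ ?_
    · exact (Real.continuous_exp.comp continuous_abs.neg).aestronglyMeasurable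
    · filter_upwards with t
      rw [Real.norm_eq_abs, abs_of_pos (Real.exp_pos _)]
      exact expbd t
  set I1 := ∫ t : ℝ, Real.exp (-|t|) with hI1
  set Im := ∫ u : ℝ, (1 + |u|) ^ (-m) with hIm
  have hI1nn : 0 ≤ I1 := integral_nonneg fun t => (Real.exp_pos _).le
  have hImnn : 0 ≤ Im := integral_nonneg fun u => ωnn u
  have h2m : (0:ℝ) < 2 ^ m := Real.rpow_pos_of_pos two_pos m
  set C := 2 ^ m * I1 + D * Im + 2 * D' * I1 + 1 with hC
  have hprod1 : (0:ℝ) ≤ 2 ^ m * I1 := mul_nonneg h2m.le hI1nn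
  have hprod2 : (0:ℝ) ≤ D * Im := mul_nonneg hD0.le hImnn
  have hprod3 : (0:ℝ) ≤ 2 * D' * I1 := mul_nonneg (by linarith) hI1nn
  have hC0 : 0 < C := by rw [hC]; linarith
  refine ⟨C, hC0, fun k p x hk hp => ?_⟩
  -- integrability and values of the shifted exponentials
  have hεint : ∀ c : ℝ, 0 < c → Integrable (fun y : ℝ => Real.exp (-(c * |x - y|))) := by
    intro c hc
    have h1 : Integrable (fun t : ℝ => Real.exp (-|c * t|)) :=
      expInt.comp_mul_left' hc.ne'
    have h2 : Integrable (fun y : ℝ => Real.exp (-|c * (x - y)|)) := h1.comp_sub_left x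
    have heq : (fun y : ℝ => Real.exp (-|c * (x - y)|))
        = fun y : ℝ => Real.exp (-(c * |x - y|)) := by
      funext y; rw [abs_mul, abs_of_pos hc]
    rwa [heq] at h2
  have hεval : ∀ c : ℝ, 0 < c →
      (∫ y : ℝ, Real.exp (-(c * |x - y|))) = c⁻¹ * I1 := by
    intro c hc
    have h1 : (∫ y : ℝ, Real.exp (-(c * |x - y|)))
        = ∫ y : ℝ, (fun t : ℝ => Real.exp (-|c * t|)) (x - y) := by
      congr 1; funext y; simp only; rw [abs_mul, abs_of_pos hc]
    rw [h1, integral_sub_left_eq_self (fun t : ℝ => Real.exp (-|c * t|)) volume x]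
    have h2 : (∫ t : ℝ, Real.exp (-|c * t|))
        = ∫ t : ℝ, (fun u : ℝ => Real.exp (-|u|)) (c * t) := rfl
    rw [h2, MeasureTheory.Measure.integral_comp_mul_left (fun u : ℝ => Real.exp (-|u|)) c,
      smul_eq_mul, abs_of_pos (inv_pos.mpr hc)]
  have hωcint : Integrable (fun y : ℝ => (1 + |p * y|) ^ (-m)) :=
    ωint.comp_mul_left' hp.ne'
  have hωval : (∫ y : ℝ, (1 + |p * y|) ^ (-m)) = p⁻¹ * Im := by
    have h2 : (∫ y : ℝ, (1 + |p * y|) ^ (-m))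
        = ∫ y : ℝ, (fun u : ℝ => (1 + |u|) ^ (-m)) (p * y) := rfl
    rw [h2, MeasureTheory.Measure.integral_comp_mul_left (fun u : ℝ => (1 + |u|) ^ (-m)) p,
      smul_eq_mul, abs_of_pos (inv_pos.mpr hp)]
  -- region 1 estimate
  have r1 : ∀ y : ℝ, |x| / 2 ≤ |y| →
      (1 + |p * y|) ^ (-m) ≤ 2 ^ m * (1 + |p * x|) ^ (-m) := by
    intro y hy
    have h1 : (0:ℝ) < 1 + |p * x| := by positivity
    have h2 : (1 + |p * x|) / 2 ≤ 1 + |p * y| := by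
      rw [abs_mul, abs_mul, abs_of_pos hp]
      have h3 : p * (|x| / 2) ≤ p * |y| := mul_le_mul_of_nonneg_left hy hp.le
      nlinarith
    calc (1 + |p * y|) ^ (-m)
        ≤ ((1 + |p * x|) / 2) ^ (-m) :=
          Real.rpow_le_rpow_of_nonpos (by positivity) h2 (by linarith)
      _ = 2 ^ m * (1 + |p * x|) ^ (-m) := by
          rw [Real.div_rpow h1.le (by norm_num), Real.rpow_neg (by norm_num : (0:ℝ) ≤ 2),
            div_eq_mul_inv, inv_inv, mul_comm]
  -- |x - y| ≥ |x|/2 in region 2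
  have r2 : ∀ y : ℝ, ¬ |x| / 2 ≤ |y| → |x| / 2 ≤ |x - y| := by
    intro y hy
    have h1 := abs_sub_abs_le_abs_sub x y
    have h2 := not_le.mp hy
    linarith
  have hFnn : ∀ y : ℝ, (0:ℝ) ≤ Real.exp (-(k * |x - y|)) * (1 + |p * y|) ^ (-m) := by
    intro y
    exact mul_nonneg (Real.exp_pos _).le (ωnn _)
  constructor
  · -- case p < k
    intro hpk
    have hk2 : (0:ℝ) < k / 2 := by linarith
    have key : (∫ y : ℝ, Real.exp (-(k * |x - y|)) * (1 + |p * y|) ^ (-m))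
        ≤ ∫ y : ℝ, (2 ^ m * (1 + |p * x|) ^ (-m) * Real.exp (-(k * |x - y|))
            + D' * (1 + |p * x|) ^ (-m) * Real.exp (-(k / 2 * |x - y|))) := by
      refine integral_mono_of_nonneg (Filter.Eventually.of_forall hFnn)
        (((hεint k hk).const_mul _).add ((hεint (k/2) hk2).const_mul _))
        (Filter.Eventually.of_forall fun y => ?_)
      simp only
      by_cases hy : |x| / 2 ≤ |y|
      · have hb := r1 y hy
        have t1 : Real.exp (-(k * |x - y|)) * (1 + |p * y|) ^ (-m)
            ≤ 2 ^ m * (1 + |p * x|) ^ (-m) * Real.exp (-(k * |x - y|)) := by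
          rw [mul_comm]
          exact mul_le_mul_of_nonneg_right hb (Real.exp_pos _).le
        have t2 : (0:ℝ) ≤ D' * (1 + |p * x|) ^ (-m) * Real.exp (-(k / 2 * |x - y|)) := by
          positivity
        linarith
      · have hxy := r2 y hy
        have e1 : Real.exp (-(k * |x - y|))
            ≤ Real.exp (-(k / 2 * |x - y|)) * Real.exp (-(1/4 * (p * |x|))) := by
          rw [← Real.exp_add]
          apply Real.exp_le_exp.mpr
          have h1 : k * (|x| / 2) ≤ k * |x - y| := mul_le_mul_of_nonneg_left hxy hk.le
          have h2 : p * |x| ≤ k * |x| := mul_le_mul_of_nonneg_right hpk.le (abs_nonneg x)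
          nlinarith
        have e2 : Real.exp (-(1/4 * (p * |x|))) ≤ D' * (1 + p * |x|) ^ (-m) :=
          hD' (p * |x|) (by positivity)
        have e3 : (1 + |p * y|) ^ (-m) ≤ 1 :=
          Real.rpow_le_one_of_one_le_of_nonpos (by linarith [abs_nonneg (p * y)]) (by linarith)
        have habs : |p * x| = p * |x| := by rw [abs_mul, abs_of_pos hp]
        have t1 : Real.exp (-(k * |x - y|)) * (1 + |p * y|) ^ (-m)
            ≤ D' * (1 + |p * x|) ^ (-m) * Real.exp (-(k / 2 * |x - y|)) := by
          rw [habs]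
          calc Real.exp (-(k * |x - y|)) * (1 + |p * y|) ^ (-m)
              ≤ Real.exp (-(k * |x - y|)) * 1 :=
                mul_le_mul_of_nonneg_left e3 (Real.exp_pos _).le
            _ = Real.exp (-(k * |x - y|)) := mul_one _
            _ ≤ Real.exp (-(k / 2 * |x - y|)) * Real.exp (-(1/4 * (p * |x|))) := e1
            _ ≤ Real.exp (-(k / 2 * |x - y|)) * (D' * (1 + p * |x|) ^ (-m)) :=
                mul_le_mul_of_nonneg_left e2 (Real.exp_pos _).le
            _ = D' * (1 + p * |x|) ^ (-m) * Real.exp (-(k / 2 * |x - y|)) := by ring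
        have t2 : (0:ℝ) ≤ 2 ^ m * (1 + |p * x|) ^ (-m) * Real.exp (-(k * |x - y|)) := by
          positivity
        linarith
    rw [integral_add ((hεint k hk).const_mul _) ((hεint (k/2) hk2).const_mul _),
      integral_const_mul, integral_const_mul, hεval k hk, hεval (k/2) hk2] at key
    have hhalf : ((k/2)⁻¹ : ℝ) = 2 * k⁻¹ := by
      rw [inv_div]; ring
    rw [hhalf] at key
    have hω : (0:ℝ) ≤ (1 + |p * x|) ^ (-m) := ωnn _
    have hki : (0:ℝ) ≤ k⁻¹ := (inv_pos.mpr hk).le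
    calc (∫ y : ℝ, Real.exp (-(k * |x - y|)) * (1 + |p * y|) ^ (-m))
        ≤ 2 ^ m * (1 + |p * x|) ^ (-m) * (k⁻¹ * I1)
          + D' * (1 + |p * x|) ^ (-m) * (2 * k⁻¹ * I1) := key
      _ = (2 ^ m * I1 + 2 * D' * I1) * k⁻¹ * (1 + |p * x|) ^ (-m) := by ring
      _ ≤ C * k⁻¹ * (1 + |p * x|) ^ (-m) := by
          have : 2 ^ m * I1 + 2 * D' * I1 ≤ C := by rw [hC]; linarith
          exact mul_le_mul_of_nonneg_right
            (mul_le_mul_of_nonneg_right this hki) hω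
  · -- case k ≤ p
    intro hkp
    have key : (∫ y : ℝ, Real.exp (-(k * |x - y|)) * (1 + |p * y|) ^ (-m))
        ≤ ∫ y : ℝ, (2 ^ m * (1 + |p * x|) ^ (-m) * Real.exp (-(k * |x - y|))
            + D * (1 + |k * x|) ^ (-m) * (1 + |p * y|) ^ (-m)) := by
      refine integral_mono_of_nonneg (Filter.Eventually.of_forall hFnn)
        (((hεint k hk).const_mul _).add (hωcint.const_mul _))
        (Filter.Eventually.of_forall fun y => ?_)
      simp only
      by_cases hy : |x| / 2 ≤ |y|
      · have hb := r1 y hy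
        have t1 : Real.exp (-(k * |x - y|)) * (1 + |p * y|) ^ (-m)
            ≤ 2 ^ m * (1 + |p * x|) ^ (-m) * Real.exp (-(k * |x - y|)) := by
          rw [mul_comm]
          exact mul_le_mul_of_nonneg_right hb (Real.exp_pos _).le
        have t2 : (0:ℝ) ≤ D * (1 + |k * x|) ^ (-m) * (1 + |p * y|) ^ (-m) := by
          positivity
        linarith
      · have hxy := r2 y hy
        have e1 : Real.exp (-(k * |x - y|)) ≤ Real.exp (-(1/2 * (k * |x|))) := by
          apply Real.exp_le_exp.mpr
          have h1 : k * (|x| / 2) ≤ k * |x - y| := mul_le_mul_of_nonneg_left hxy hk.le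
          linarith
        have e2 : Real.exp (-(1/2 * (k * |x|))) ≤ D * (1 + k * |x|) ^ (-m) :=
          hD (k * |x|) (by positivity)
        have habs : |k * x| = k * |x| := by rw [abs_mul, abs_of_pos hk]
        have t1 : Real.exp (-(k * |x - y|)) * (1 + |p * y|) ^ (-m)
            ≤ D * (1 + |k * x|) ^ (-m) * (1 + |p * y|) ^ (-m) := by
          rw [habs]
          exact mul_le_mul_of_nonneg_right (e1.trans e2) (ωnn _)
        have t2 : (0:ℝ) ≤ 2 ^ m * (1 + |p * x|) ^ (-m) * Real.exp (-(k * |x - y|)) := by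
          positivity
        linarith
    rw [integral_add ((hεint k hk).const_mul _) (hωcint.const_mul _),
      integral_const_mul, integral_const_mul, hεval k hk, hωval] at key
    have hωp : (0:ℝ) ≤ (1 + |p * x|) ^ (-m) := ωnn _
    have hωk : (0:ℝ) ≤ (1 + |k * x|) ^ (-m) := ωnn _
    have hki : (0:ℝ) ≤ k⁻¹ := (inv_pos.mpr hk).le
    have hpi : (0:ℝ) ≤ p⁻¹ := (inv_pos.mpr hp).le
    calc (∫ y : ℝ, Real.exp (-(k * |x - y|)) * (1 + |p * y|) ^ (-m))
        ≤ 2 ^ m * (1 + |p * x|) ^ (-m) * (k⁻¹ * I1)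
          + D * (1 + |k * x|) ^ (-m) * (p⁻¹ * Im) := key
      _ = (D * Im) * (p⁻¹ * (1 + |k * x|) ^ (-m))
          + (2 ^ m * I1) * (k⁻¹ * (1 + |p * x|) ^ (-m)) := by ring
      _ ≤ C * (p⁻¹ * (1 + |k * x|) ^ (-m)) + C * (k⁻¹ * (1 + |p * x|) ^ (-m)) := by
          have hc1 : D * Im ≤ C := by rw [hC]; linarith
          have hc2 : 2 ^ m * I1 ≤ C := by rw [hC]; linarith
          have hn1 : (0:ℝ) ≤ p⁻¹ * (1 + |k * x|) ^ (-m) := mul_nonneg hpi hωk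
          have hn2 : (0:ℝ) ≤ k⁻¹ * (1 + |p * x|) ^ (-m) := mul_nonneg hki hωp
          have := mul_le_mul_of_nonneg_right hc1 hn1
          have := mul_le_mul_of_nonneg_right hc2 hn2
          linarith
      _ = C * (p⁻¹ * (1 + |k * x|) ^ (-m) + k⁻¹ * (1 + |p * x|) ^ (-m)) := by ring
end

section
/- Let m > 1, n > (d-1)/3, s ≥ 1, and for k ≥ 0 set k_s = min(k,1) + s^{-1/2}. Then ∫_{ℝ^{d-1}} (1 + |k⃗ - p⃗|³ s)^{-n} (1 + |p⃗|³ s)^{-n} dp⃗ ≤ C (1 + |k⃗|³ s)^{-n} s^{-(d-1)/3} for all k⃗ ∈ ℝ^{d-1}, where C depends only on n and d. -/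
open MeasureTheory Module

lemma aux_rpow_div8 {n a b : ℝ} (hn : 0 < n) (ha : 0 < a) (hb : 0 < b)
    (h : a ≤ 8 * b) : b ^ (-n) ≤ 8 ^ n * a ^ (-n) := by
  have h8 : (0:ℝ) < 8 := by norm_num
  have hd : a / 8 ≤ b := by linarith [(div_le_iff₀ h8).mpr (by linarith : a ≤ b * 8)]
  have h1 : b ^ (-n) ≤ (a / 8) ^ (-n) :=
    Real.rpow_le_rpow_of_nonpos (by positivity) hd (by linarith)
  have h2 : (a / 8) ^ (-n) = 8 ^ n * a ^ (-n) := by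
    rw [Real.div_rpow ha.le h8.le, Real.rpow_neg ha.le, Real.rpow_neg h8.le]
    field_simp
  linarith [h1, h2.le]

set_option maxHeartbeats 1000000 in
/-- Convolution estimate for the transverse weights:
    ∫ (1+|k⃗-p⃗|³s)^{-n} (1+|p⃗|³s)^{-n} dp⃗ ≤ C (1+|k⃗|³s)^{-n} s^{-(d-1)/3}. -/
theorem stmt_10 (d : ℕ) (hd : 2 ≤ d) (n : ℝ) (hn : (d - 1 : ℝ) / 3 < n) :
    ∃ C : ℝ, 0 < C ∧ ∀ s : ℝ, 1 ≤ s → ∀ kv : EuclideanSpace ℝ (Fin (d - 1)),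
      (∫ pv : EuclideanSpace ℝ (Fin (d - 1)),
          (1 + ‖kv - pv‖ ^ 3 * s) ^ (-n) * (1 + ‖pv‖ ^ 3 * s) ^ (-n))
        ≤ C * (1 + ‖kv‖ ^ 3 * s) ^ (-n) * s ^ (-((d - 1 : ℝ) / 3)) := by
  have hd2 : (2:ℝ) ≤ (d:ℝ) := by exact_mod_cast hd
  have hn0 : 0 < n := lt_trans (by linarith : (0:ℝ) < (d - 1 : ℝ)/3) hn
  set E := EuclideanSpace ℝ (Fin (d - 1)) with hE
  set g : E → ℝ := fun q => (1 + ‖q‖ ^ 3) ^ (-n) with hg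
  have hfr : (finrank ℝ E : ℝ) = (d:ℝ) - 1 := by
    have h0 : finrank ℝ E = d - 1 := finrank_euclideanSpace_fin
    have h1 : (1:ℕ) ≤ d := by omega
    rw [h0]
    push_cast [Nat.cast_sub h1]
    ring
  have hgcont : Continuous g := by
    apply Continuous.rpow_const (by continuity)
    intro x; left; positivity
  -- Integrability of g
  have hgint : Integrable g := by
    have h3n : (finrank ℝ E : ℝ) < 3 * n := by rw [hfr]; linarith
    refine ((integrable_one_add_norm (E := E) h3n).const_mul ((7:ℝ) ^ n)).mono'
      hgcont.aestronglyMeasurable ?_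
    filter_upwards with q
    set t := ‖q‖ with ht
    have ht0 : 0 ≤ t := norm_nonneg q
    have hbase : (1 + t) ^ (3:ℕ) ≤ 7 * (1 + t ^ 3) := by nlinarith [sq_nonneg t, sq_nonneg (t-1), sq_nonneg (t+1)]
    have h1 : (1 + t) ^ (3 * n) ≤ 7 ^ n * (1 + t ^ 3) ^ n := by
      have : (1 + t) ^ (3 * n) = ((1 + t) ^ (3:ℕ)) ^ n := by
        rw [← Real.rpow_natCast (1 + t) 3, ← Real.rpow_mul (by linarith)]
        norm_num
      rw [this, ← Real.mul_rpow (by norm_num) (by positivity)]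
      exact Real.rpow_le_rpow (by positivity) hbase hn0.le
    have hnorm : ‖g q‖ = (1 + t ^ 3) ^ (-n) := by
      rw [Real.norm_eq_abs, abs_of_nonneg (by positivity)]
    rw [hnorm]
    rw [Real.rpow_neg (by positivity), Real.rpow_neg (by positivity), ← one_div, ← one_div,
      mul_one_div, div_le_div_iff₀ (by positivity) (by positivity), one_mul]
    exact h1
  set I : ℝ := ∫ q, g q with hI
  have hI0 : 0 ≤ I := integral_nonneg fun q => by positivity
  refine ⟨2 * 8 ^ n * (I + 1), by positivity, ?_⟩
  intro s hs kv
  have hs0 : (0:ℝ) < s := by linarith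
  set w : E → ℝ := fun p => (1 + ‖p‖ ^ 3 * s) ^ (-n) with hw
  have hwcont : Continuous w := by
    apply Continuous.rpow_const (by continuity)
    intro x; left; positivity
  have hwpos : ∀ p, 0 < w p := fun p => by
    have : (0:ℝ) < 1 + ‖p‖ ^ 3 * s := by positivity
    positivity
  -- scaling identity
  have hscale : ∫ p, w p = s ^ (-((d - 1 : ℝ) / 3)) * I := by
    have hR : (0:ℝ) ≤ s ^ ((1:ℝ)/3) := by positivity
    have hcomp : ∀ p : E, w p = g ((s ^ ((1:ℝ)/3)) • p) := by
      intro p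
      have hns : ‖(s ^ ((1:ℝ)/3)) • p‖ = s ^ ((1:ℝ)/3) * ‖p‖ := by
        rw [norm_smul, Real.norm_eq_abs, abs_of_nonneg hR]
      have hcube : (s ^ ((1:ℝ)/3)) ^ (3:ℕ) = s := by
        rw [← Real.rpow_natCast (s ^ ((1:ℝ)/3)) 3, ← Real.rpow_mul hs0.le]
        norm_num
      simp only [hw, hg, hns, mul_pow, hcube]
      ring_nf
    have := Measure.integral_comp_smul_of_nonneg (volume : Measure E) g (s ^ ((1:ℝ)/3)) (hR := hR)
    simp only [← hcomp] at this
    rw [this, smul_eq_mul, ← hI]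
    congr 1
    rw [← Real.rpow_natCast (s ^ ((1:ℝ)/3)) (finrank ℝ E), ← Real.rpow_mul hs0.le,
      ← Real.rpow_neg hs0.le]
    congr 1
    rw [hfr]
    ring
  -- integrability of w
  have hwint : Integrable w := by
    refine hgint.mono' hwcont.aestronglyMeasurable ?_
    filter_upwards with p
    rw [Real.norm_eq_abs, abs_of_nonneg (hwpos p).le]
    exact Real.rpow_le_rpow_of_nonpos (by positivity) (by nlinarith [pow_nonneg (norm_nonneg p) 3]) (by linarith)
  have hw2int : Integrable (fun p => w (kv - p)) := hwint.comp_sub_left kv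
  have hw2eq : ∫ p, w (kv - p) = ∫ p, w p := integral_sub_left_eq_self w volume kv
  -- pointwise key bound
  have hkey : ∀ x : E, ‖kv‖ ≤ 2 * ‖x‖ → w x ≤ 8 ^ n * w kv := by
    intro x hx
    have h1 : ‖kv‖ ^ 3 ≤ 8 * ‖x‖ ^ 3 := by
      have := pow_le_pow_left₀ (norm_nonneg kv) hx 3
      nlinarith [this]
    have h2 : 1 + ‖kv‖ ^ 3 * s ≤ 8 * (1 + ‖x‖ ^ 3 * s) := by nlinarith [pow_nonneg (norm_nonneg x) 3]
    exact aux_rpow_div8 hn0 (by positivity) (by positivity) h2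
  have hpt : ∀ p, w (kv - p) * w p ≤ 8 ^ n * w kv * (w p + w (kv - p)) := by
    intro p
    have htri : ‖kv‖ ≤ ‖p‖ + ‖kv - p‖ := by
      have he : p + (kv - p) = kv := by abel
      calc ‖kv‖ = ‖p + (kv - p)‖ := by rw [he]
        _ ≤ ‖p‖ + ‖kv - p‖ := norm_add_le _ _
    have h8w : (0:ℝ) ≤ 8 ^ n * w kv := by positivity
    rcases le_total ‖p‖ ‖kv - p‖ with h | h
    · have hx : ‖kv‖ ≤ 2 * ‖kv - p‖ := by linarith
      have hb := hkey (kv - p) hx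
      calc w (kv - p) * w p ≤ (8 ^ n * w kv) * w p :=
            mul_le_mul_of_nonneg_right hb (hwpos p).le
        _ ≤ 8 ^ n * w kv * (w p + w (kv - p)) :=
            mul_le_mul_of_nonneg_left (by linarith [(hwpos (kv - p)).le]) h8w
    · have hx : ‖kv‖ ≤ 2 * ‖p‖ := by linarith
      have hb := hkey p hx
      calc w (kv - p) * w p ≤ w (kv - p) * (8 ^ n * w kv) :=
            mul_le_mul_of_nonneg_left hb (hwpos (kv - p)).le
        _ = (8 ^ n * w kv) * w (kv - p) := by ring
        _ ≤ 8 ^ n * w kv * (w p + w (kv - p)) :=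
            mul_le_mul_of_nonneg_left (by linarith [(hwpos p).le]) h8w
  -- integrability of product
  have hprodint : Integrable (fun p => w (kv - p) * w p) := by
    refine hwint.mono' ?_ ?_
    · exact ((hwcont.comp (continuous_const.sub continuous_id)).mul hwcont).aestronglyMeasurable
    · filter_upwards with p
      rw [Real.norm_eq_abs, abs_of_nonneg (mul_nonneg (hwpos (kv - p)).le (hwpos p).le)]
      have hb1 : (1:ℝ) ≤ 1 + ‖kv - p‖ ^ 3 * s := by
        have : (0:ℝ) ≤ ‖kv - p‖ ^ 3 * s := mul_nonneg (pow_nonneg (norm_nonneg _) 3) hs0.le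
        linarith
      have h1 : w (kv - p) ≤ 1 := Real.rpow_le_one_of_one_le_of_nonpos hb1 (by linarith)
      calc w (kv - p) * w p ≤ 1 * w p := mul_le_mul_of_nonneg_right h1 (hwpos p).le
        _ = w p := one_mul _
  have hrhsint : Integrable (fun p => 8 ^ n * w kv * (w p + w (kv - p))) :=
    (hwint.add hw2int).const_mul _
  calc (∫ p, w (kv - p) * w p)
      ≤ ∫ p, 8 ^ n * w kv * (w p + w (kv - p)) := integral_mono hprodint hrhsint hpt
    _ = 8 ^ n * w kv * ((∫ p, w p) + ∫ p, w (kv - p)) := by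
        rw [integral_const_mul, integral_add hwint hw2int]
    _ = 8 ^ n * w kv * (2 * (s ^ (-((d - 1 : ℝ) / 3)) * I)) := by rw [hw2eq, hscale]; ring
    _ = 2 * 8 ^ n * I * w kv * s ^ (-((d - 1 : ℝ) / 3)) := by ring
    _ ≤ 2 * 8 ^ n * (I + 1) * w kv * s ^ (-((d - 1 : ℝ) / 3)) := by
        gcongr
        linarith
end

section
/- For d ≥ 2, s ≥ 1 and n > (d+1)/3, one has ∫_{ℝ^{d-1}} (p + s^{-1/2})² (1 + p³ s)^{-n} dp⃗ ≤ C s^{-(d+1)/3}, where p = |p⃗| and C depends only on d, n. -/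
open MeasureTheory Module

lemma aux_cube (p : ℝ) (hp : 0 ≤ p) : (1 + p) ^ 3 ≤ 4 * (1 + p ^ 3) := by
  nlinarith [sq_nonneg (p - 1), sq_nonneg p, sq_nonneg (p + 1)]

lemma aux_integrable (m : ℕ) (n : ℝ) (hn : (m : ℝ) + 2 < 3 * n) :
    Integrable (fun q : EuclideanSpace ℝ (Fin m) =>
      (‖q‖ + 1) ^ 2 * (1 + ‖q‖ ^ 3) ^ (-n)) := by
  have hn0 : (0 : ℝ) < n := by have := Nat.cast_nonneg (α := ℝ) m; linarith
  have hr : (finrank ℝ (EuclideanSpace ℝ (Fin m)) : ℝ) < 3 * n - 2 := by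
    rw [finrank_euclideanSpace_fin]; linarith
  refine ((integrable_one_add_norm hr).const_mul ((4:ℝ) ^ n)).mono' ?_ ?_
  · apply Continuous.aestronglyMeasurable
    apply Continuous.mul (by fun_prop)
    apply Continuous.rpow_const (by fun_prop)
    intro q; left; positivity
  · refine Filter.Eventually.of_forall fun q => ?_
    set p := ‖q‖ with hp
    have hp0 : 0 ≤ p := norm_nonneg q
    have key : (1 + p ^ 3) ^ (-n) ≤ (4:ℝ) ^ n * ((1 + p) ^ (3:ℕ)) ^ (-n) := by
      have h1 : ((1 + p) ^ (3:ℕ)) ^ (-n) ≥ (4 * (1 + p ^ 3)) ^ (-n) :=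
        Real.rpow_le_rpow_of_nonpos (by positivity) (aux_cube p hp0) (by linarith)
      have h2 : (4 * (1 + p ^ 3) : ℝ) ^ (-n) = (4:ℝ) ^ (-n) * (1 + p ^ 3) ^ (-n) :=
        Real.mul_rpow (by norm_num) (by positivity)
      have h4 : (0:ℝ) < (4:ℝ) ^ (-n) := by positivity
      calc (1 + p ^ 3) ^ (-n) = (4:ℝ) ^ n * ((4:ℝ) ^ (-n) * (1 + p ^ 3) ^ (-n)) := by
            rw [← mul_assoc, ← Real.rpow_add (by norm_num)]; simp
        _ ≤ (4:ℝ) ^ n * ((1 + p) ^ (3:ℕ)) ^ (-n) := by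
            rw [← h2]; exact mul_le_mul_of_nonneg_left h1 (by positivity)
    have hnorm : ‖(p + 1) ^ 2 * (1 + p ^ 3) ^ (-n)‖
        = (p + 1) ^ 2 * (1 + p ^ 3) ^ (-n) := by
      rw [Real.norm_of_nonneg]; positivity
    rw [hnorm]
    calc (p + 1) ^ 2 * (1 + p ^ 3) ^ (-n)
        ≤ (p + 1) ^ 2 * ((4:ℝ) ^ n * ((1 + p) ^ (3:ℕ)) ^ (-n)) :=
          mul_le_mul_of_nonneg_left key (by positivity)
      _ = (4:ℝ) ^ n * (1 + ‖q‖) ^ (-(3 * n - 2)) := by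
          rw [← Real.rpow_natCast (1 + p) 3, ← Real.rpow_mul (by positivity),
            ← Real.rpow_natCast (p + 1) 2, add_comm p 1, mul_left_comm,
            ← Real.rpow_add (by positivity : (0:ℝ) < 1 + p)]
          congr 2
          push_cast
          ring

/-- ∫ (p + s^{-1/2})² (1 + p³s)^{-n} dp⃗ ≤ C s^{-(d+1)/3}. -/
theorem stmt_11 (d : ℕ) (hd : 2 ≤ d) (n : ℝ) (hn : (d + 1 : ℝ) / 3 < n) :
    ∃ C : ℝ, 0 < C ∧ ∀ s : ℝ, 1 ≤ s →
      (∫ pv : EuclideanSpace ℝ (Fin (d - 1)),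
          (‖pv‖ + s ^ (-(1 / 2 : ℝ))) ^ 2 * (1 + ‖pv‖ ^ 3 * s) ^ (-n))
        ≤ C * s ^ (-((d + 1 : ℝ) / 3)) := by
  set m := d - 1 with hm
  have hmd : (m : ℝ) = (d : ℝ) - 1 := by
    rw [hm, Nat.cast_sub (by omega : 1 ≤ d)]; norm_num
  have hmn : (m : ℝ) + 2 < 3 * n := by
    have h1 : (d : ℝ) + 1 < n * 3 := (div_lt_iff₀ (by norm_num)).1 hn
    rw [hmd]; linarith
  set g := fun q : EuclideanSpace ℝ (Fin m) => (‖q‖ + 1) ^ 2 * (1 + ‖q‖ ^ 3) ^ (-n)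
    with hgdef
  have hg : Integrable g := aux_integrable m n hmn
  have hgnn : 0 ≤ ∫ q, g q := integral_nonneg fun q => by positivity
  refine ⟨(∫ q, g q) + 1, by linarith, fun s hs => ?_⟩
  have hs0 : (0 : ℝ) < s := lt_of_lt_of_le one_pos hs
  set r := s ^ (-(1/3) : ℝ) with hrdef
  have hr0 : 0 < r := Real.rpow_pos_of_pos hs0 _
  set F := fun pv : EuclideanSpace ℝ (Fin m) =>
      (‖pv‖ + s ^ (-(1 / 2 : ℝ))) ^ 2 * (1 + ‖pv‖ ^ 3 * s) ^ (-n) with hFdef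
  have key : (∫ pv, F pv) = r ^ finrank ℝ (EuclideanSpace ℝ (Fin m)) * ∫ q, F (r • q) := by
    rw [Measure.integral_comp_smul_of_nonneg volume F r (hR := hr0.le), smul_eq_mul, ← mul_assoc,
      mul_inv_cancel₀ (pow_ne_zero _ hr0.ne'), one_mul]
  have hr3 : r ^ (3 : ℕ) * s = 1 := by
    rw [hrdef, ← Real.rpow_natCast (s ^ (-(1/3) : ℝ)) 3, ← Real.rpow_mul hs0.le]
    norm_num [Real.rpow_neg_one, inv_mul_cancel₀ hs0.ne']
  have hr2 : r ^ (2 : ℕ) = s ^ (-(2/3) : ℝ) := by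
    rw [hrdef, ← Real.rpow_natCast (s ^ (-(1/3) : ℝ)) 2, ← Real.rpow_mul hs0.le]
    norm_num
  have hptw : ∀ q : EuclideanSpace ℝ (Fin m), F (r • q) ≤ s ^ (-(2/3) : ℝ) * g q := by
    intro q
    have hnrm : ‖r • q‖ = r * ‖q‖ := by
      rw [norm_smul, Real.norm_eq_abs, abs_of_pos hr0]
    have hsr : s ^ (-(1/2) : ℝ) ≤ r :=
      Real.rpow_le_rpow_of_exponent_le hs (by norm_num)
    have h1 : (‖r • q‖ + s ^ (-(1/2) : ℝ)) ^ 2 ≤ r ^ 2 * (‖q‖ + 1) ^ 2 := by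
      rw [hnrm]
      have : r * ‖q‖ + s ^ (-(1/2) : ℝ) ≤ r * (‖q‖ + 1) := by
        rw [mul_add, mul_one]; linarith
      calc (r * ‖q‖ + s ^ (-(1/2) : ℝ)) ^ 2 ≤ (r * (‖q‖ + 1)) ^ 2 := by
            apply pow_le_pow_left₀ (by positivity) this
        _ = r ^ 2 * (‖q‖ + 1) ^ 2 := by ring
    have h2 : (1 + ‖r • q‖ ^ 3 * s : ℝ) = 1 + ‖q‖ ^ 3 := by
      rw [hnrm]
      have : (r * ‖q‖) ^ 3 * s = ‖q‖ ^ 3 * (r ^ (3:ℕ) * s) := by ring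
      rw [this, hr3, mul_one]
    have h3 : (0:ℝ) ≤ (1 + ‖q‖ ^ 3) ^ (-n) := by positivity
    calc F (r • q) = (‖r • q‖ + s ^ (-(1/2) : ℝ)) ^ 2 * (1 + ‖q‖ ^ 3) ^ (-n) := by
          rw [hFdef]; simp only [h2]
      _ ≤ r ^ 2 * (‖q‖ + 1) ^ 2 * (1 + ‖q‖ ^ 3) ^ (-n) :=
          mul_le_mul_of_nonneg_right h1 h3
      _ = s ^ (-(2/3) : ℝ) * g q := by rw [hgdef, ← hr2]; ring
  have hint : (∫ q, F (r • q)) ≤ s ^ (-(2/3) : ℝ) * ∫ q, g q := by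
    rw [← integral_const_mul]
    refine integral_mono_of_nonneg (Filter.Eventually.of_forall fun q => ?_)
      (hg.const_mul _) (Filter.Eventually.of_forall hptw)
    rw [hFdef]; positivity
  have hpow : r ^ finrank ℝ (EuclideanSpace ℝ (Fin m)) * s ^ (-(2/3) : ℝ)
      = s ^ (-((d + 1 : ℝ) / 3)) := by
    rw [finrank_euclideanSpace_fin, hrdef, ← Real.rpow_natCast (s ^ (-(1/3) : ℝ)) m,
      ← Real.rpow_mul hs0.le, ← Real.rpow_add hs0]
    congr 1
    rw [hmd]; ring
  have hX : 0 < s ^ (-((d + 1 : ℝ) / 3)) := Real.rpow_pos_of_pos hs0 _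
  calc (∫ pv, F pv) = r ^ finrank ℝ (EuclideanSpace ℝ (Fin m)) * ∫ q, F (r • q) := key
    _ ≤ r ^ finrank ℝ (EuclideanSpace ℝ (Fin m)) * (s ^ (-(2/3) : ℝ) * ∫ q, g q) :=
        mul_le_mul_of_nonneg_left hint (by positivity)
    _ = (∫ q, g q) * (r ^ finrank ℝ (EuclideanSpace ℝ (Fin m)) * s ^ (-(2/3) : ℝ)) := by ring
    _ = (∫ q, g q) * s ^ (-((d + 1 : ℝ) / 3)) := by rw [hpow]
    _ ≤ ((∫ q, g q) + 1) * s ^ (-((d + 1 : ℝ) / 3)) := by nlinarith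
end

section
/- The function U₂⁰(x) = (-1 - 6eˣ + 5e^{2x} + 2e^{3x} + 6e^{2x}x)/(2eˣ(1+eˣ)²) satisfies (D₀ H₀) U₂⁰ = 0 where D₀ = -d²/dx², H₀ = -d²/dx² + 1 + V and V(x) = -(3/2)/cosh(x/2)², and U₂⁰(x) → 1 as x → +∞. -/
/-!
The function `U₂` solves the inhomogeneous equation `H₀ U₂ = 1` identically, so `D₀ = -∂ₓ²`
annihilates `H₀ U₂`. With `e = exp x`, the potential is `V = -6e/(1+e)²` and `U₂` together with its
first two derivatives are rational in `e` and linear in `x`, so `H₀ U₂ = 1` is a polynomial identity.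
Dividing numerator and denominator of `U₂` by `e³` exhibits its limit `1` at `+∞`, since `e⁻¹` and
`x e⁻¹` tend to `0`.
-/

open Filter Real

noncomputable def U₂ (x : ℝ) : ℝ :=
  (-1 - 6 * exp x + 5 * exp (2 * x) + 2 * exp (3 * x) + 6 * exp (2 * x) * x)
    / (2 * exp x * (1 + exp x) ^ 2)

noncomputable def U₂' (x : ℝ) : ℝ :=
  (1 + 4 * exp x + 26 * exp x ^ 2 + 28 * exp x ^ 3 + 5 * exp x ^ 4
      + 6 * x * exp x ^ 2 - 6 * x * exp x ^ 4)
    / (2 * exp x * (1 + exp x) ^ 4)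

noncomputable def U₂'' (x : ℝ) : ℝ :=
  (-1 - 4 * exp x + 20 * exp x ^ 2 - 36 * exp x ^ 3 - 11 * exp x ^ 4
      + 6 * x * exp x ^ 2 - 24 * x * exp x ^ 3 + 6 * x * exp x ^ 4)
    / (2 * exp x * (1 + exp x) ^ 4)

noncomputable def V (x : ℝ) : ℝ := -(3 / 2) / cosh (x / 2) ^ 2

noncomputable def H₀ (f : ℝ → ℝ) (x : ℝ) : ℝ := -deriv (deriv f) x + f x + V x * f x

lemma U₂_eq_exp_pow : U₂ = fun x =>
    (-1 - 6 * exp x + 5 * exp x ^ 2 + 2 * exp x ^ 3 + 6 * exp x ^ 2 * x)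
      / (2 * exp x * (1 + exp x) ^ 2) := by
  ext x
  rw [U₂, ← exp_nat_mul, ← exp_nat_mul]
  norm_num

lemma V_eq (x : ℝ) : V x = -6 * exp x / (1 + exp x) ^ 2 := by
  have hcosh : cosh (x / 2) ^ 2 = (1 + exp x) ^ 2 / (4 * exp x) := by
    have hhalf : exp x = exp (x / 2) ^ 2 := by rw [← exp_nat_mul]; ring_nf
    rw [cosh_eq, exp_neg, hhalf]
    field_simp
    ring
  rw [V, hcosh]
  field_simp
  ring

lemma hasDerivAt_U₂ (x : ℝ) : HasDerivAt U₂ (U₂' x) x := by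
  rw [U₂_eq_exp_pow]
  have he := hasDerivAt_exp x
  have hx := hasDerivAt_id x
  have := (((((hasDerivAt_const x (-1 : ℝ)).sub (he.const_mul 6)).add ((he.pow 2).const_mul 5)).add
    ((he.pow 3).const_mul 2)).add (((he.pow 2).const_mul 6).mul hx)).div
    ((he.const_mul 2).mul (((hasDerivAt_const x (1 : ℝ)).add he).pow 2))
    (by positivity : 2 * exp x * (1 + exp x) ^ 2 ≠ 0)
  refine this.congr_deriv ?_
  simp only [U₂', Pi.add_apply, Pi.sub_apply, Pi.mul_apply, Pi.pow_apply, id]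
  field_simp
  ring

lemma hasDerivAt_U₂' (x : ℝ) : HasDerivAt U₂' (U₂'' x) x := by
  have he := hasDerivAt_exp x
  have hx := hasDerivAt_id x
  have := (((((((hasDerivAt_const x (1 : ℝ)).add (he.const_mul 4)).add ((he.pow 2).const_mul 26)).add
    ((he.pow 3).const_mul 28)).add ((he.pow 4).const_mul 5)).add ((hx.const_mul 6).mul (he.pow 2))).sub
    ((hx.const_mul 6).mul (he.pow 4))).div
    ((he.const_mul 2).mul (((hasDerivAt_const x (1 : ℝ)).add he).pow 4))
    (by positivity : 2 * exp x * (1 + exp x) ^ 4 ≠ 0)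
  refine this.congr_deriv ?_
  simp only [U₂'', Pi.add_apply, Pi.sub_apply, Pi.mul_apply, Pi.pow_apply, id]
  field_simp
  ring

lemma deriv_deriv_U₂ : deriv (deriv U₂) = U₂'' := by
  have hU₂' : deriv U₂ = U₂' := funext fun x => (hasDerivAt_U₂ x).deriv
  rw [hU₂']
  exact funext fun x => (hasDerivAt_U₂' x).deriv

lemma H₀_U₂ : H₀ U₂ = fun _ => 1 := by
  funext x
  rw [H₀, deriv_deriv_U₂, V_eq, U₂_eq_exp_pow, U₂'']
  field_simp
  ring

lemma U₂_eq_exp_neg (x : ℝ) : U₂ x =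
    (2 + 5 * exp (-x) - 6 * exp (-x) ^ 2 - exp (-x) ^ 3 + 6 * (x * exp (-x)))
      / (2 * (1 + exp (-x)) ^ 2) := by
  rw [U₂_eq_exp_pow, exp_neg]
  field_simp
  ring

lemma tendsto_U₂_atTop : Tendsto U₂ atTop (nhds 1) := by
  have hu := tendsto_exp_neg_atTop_nhds_zero
  have hv : Tendsto (fun x => x * exp (-x)) atTop (nhds 0) := by
    simpa using tendsto_pow_mul_exp_neg_atTop_nhds_zero 1
  have := (((((hu.const_mul 5).const_add 2).sub ((hu.pow 2).const_mul 6)).sub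
    (hu.pow 3)).add (hv.const_mul 6)).div (((hu.const_add 1).pow 2).const_mul 2)
    (by norm_num : (2 : ℝ) * (1 + 0) ^ 2 ≠ 0)
  norm_num at this
  exact this.congr fun x => (U₂_eq_exp_neg x).symm

/-- U₂⁰ is in the kernel of D₀H₀ (where D₀H₀ f = -∂ₓ²(-f'' + f + Vf),
    V(x) = -(3/2)/cosh(x/2)²) and tends to 1 at +∞. -/
theorem stmt_16 :
    (∀ x : ℝ,
      -(deriv (deriv (fun y : ℝ =>
          -(deriv (deriv (fun z : ℝ =>
              (-1 - 6 * Real.exp z + 5 * Real.exp (2 * z) + 2 * Real.exp (3 * z)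
                  + 6 * Real.exp (2 * z) * z)
                / (2 * Real.exp z * (1 + Real.exp z) ^ 2))) y)
            + ((-1 - 6 * Real.exp y + 5 * Real.exp (2 * y) + 2 * Real.exp (3 * y)
                  + 6 * Real.exp (2 * y) * y)
                / (2 * Real.exp y * (1 + Real.exp y) ^ 2))
            + (-(3 / 2) / (Real.cosh (y / 2)) ^ 2)
              * ((-1 - 6 * Real.exp y + 5 * Real.exp (2 * y) + 2 * Real.exp (3 * y)
                    + 6 * Real.exp (2 * y) * y)
                  / (2 * Real.exp y * (1 + Real.exp y) ^ 2)))) x) = 0) ∧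
    Tendsto (fun x : ℝ =>
        (-1 - 6 * Real.exp x + 5 * Real.exp (2 * x) + 2 * Real.exp (3 * x)
            + 6 * Real.exp (2 * x) * x)
          / (2 * Real.exp x * (1 + Real.exp x) ^ 2)) atTop (nhds 1) := by
  refine ⟨fun x => ?_, tendsto_U₂_atTop⟩
  change -deriv (deriv (H₀ U₂)) x = 0
  simp [H₀_U₂]
end
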